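/- arXiv:2207.08680 — 3 statements merged into one kernel-verified Lean document; each statement's English description precedes it below -/
import Mathlib

section
/- Under the same symmetry hypotheses on Q, G and the resonance condition δ_{jlmn} = 1 iff β_j + β_n = β_l + β_m, the collision term conserves the energy: Σ_j β_j Coll_j[w] = 0 for every w : Fin M → ℝ. -/
open Finset

/-- The collision term of the kinetic equation conserves the energy
`E = ∑ j, β j * w j`. -/
theorem collision_conserves_energy
    (M : ℕ) (hM : 1 ≤ M) (β : Fin M → ℝ) (γ : ℝ)
    (Q G : Fin M → Fin M → Fin M → Fin M → ℝ)
    (hQ : ∀ j l m n, Q j l m n = Q l j n m ∧ Q j l m n = Q m n j l ∧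
      Q j l m n = Q n m l j)
    (hG : ∀ j l m n, G j l m n = G l j n m ∧ G j l m n = G m n j l ∧
      G j l m n = G n m l j)
    (hGpos : ∀ j l m n, β j - β l - β m + β n = 0 → 0 < G j l m n)
    (w : Fin M → ℝ) :
    ∑ j, β j * (8 * γ ^ 2 * ∑ l, ∑ m, ∑ n,
      (if β j - β l - β m + β n = 0 then (1 : ℝ) else 0) *
        (Q j l m n) ^ 2 / G j l m n *
        (w l * w m * w j + w l * w m * w n - w j * w n * w m - w j * w n * w l))
      = 0 := by
  set F : Fin M → Fin M → Fin M → Fin M → ℝ := fun j l m n =>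
    (if β j - β l - β m + β n = 0 then (1 : ℝ) else 0) *
      (Q j l m n) ^ 2 / G j l m n *
      (w l * w m * w j + w l * w m * w n - w j * w n * w m - w j * w n * w l)
    with hFdef
  -- reindexing lemmas
  have conv : ∀ f : Fin M → Fin M → Fin M → Fin M → ℝ,
      ∑ j, ∑ l, ∑ m, ∑ n, f j l m n
        = ∑ p : (Fin M × Fin M) × Fin M × Fin M, f p.1.1 p.1.2 p.2.1 p.2.2 := by
    intro f
    simp [Fintype.sum_prod_type]
  have hswap1 : ∀ f : Fin M → Fin M → Fin M → Fin M → ℝ,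
      ∑ j, ∑ l, ∑ m, ∑ n, f j l m n = ∑ j, ∑ l, ∑ m, ∑ n, f l j n m := by
    intro f
    rw [Finset.sum_comm]
    exact Finset.sum_congr rfl fun j _ => Finset.sum_congr rfl fun l _ =>
      Finset.sum_comm
  have hswap2 : ∀ f : Fin M → Fin M → Fin M → Fin M → ℝ,
      ∑ j, ∑ l, ∑ m, ∑ n, f j l m n = ∑ j, ∑ l, ∑ m, ∑ n, f m n j l := by
    intro f
    rw [conv f, conv (fun j l m n => f m n j l)]
    exact Fintype.sum_equiv (Equiv.prodComm _ _) _ _ (fun p => rfl)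
  have hswap3 : ∀ f : Fin M → Fin M → Fin M → Fin M → ℝ,
      ∑ j, ∑ l, ∑ m, ∑ n, f j l m n = ∑ j, ∑ l, ∑ m, ∑ n, f n m l j := by
    intro f
    rw [hswap1 f]
    exact hswap2 (fun j l m n => f l j n m)
  -- pointwise symmetries of F
  have hF1 : ∀ j l m n, F l j n m = - F j l m n := by
    intro j l m n
    obtain ⟨q1, -, -⟩ := hQ j l m n
    obtain ⟨g1, -, -⟩ := hG j l m n
    have hc : (β l - β j - β n + β m = 0) ↔ (β j - β l - β m + β n = 0) := by
      constructor <;> intro h <;> linarith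
    simp only [hFdef]
    rw [← q1, ← g1, if_congr hc rfl rfl]
    ring
  have hF2 : ∀ j l m n, F m n j l = - F j l m n := by
    intro j l m n
    obtain ⟨-, q2, -⟩ := hQ j l m n
    obtain ⟨-, g2, -⟩ := hG j l m n
    have hc : (β m - β n - β j + β l = 0) ↔ (β j - β l - β m + β n = 0) := by
      constructor <;> intro h <;> linarith
    simp only [hFdef]
    rw [← q2, ← g2, if_congr hc rfl rfl]
    ring
  have hF3 : ∀ j l m n, F n m l j = F j l m n := by
    intro j l m n
    obtain ⟨-, -, q3⟩ := hQ j l m n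
    obtain ⟨-, -, g3⟩ := hG j l m n
    have hc : (β n - β m - β l + β j = 0) ↔ (β j - β l - β m + β n = 0) := by
      constructor <;> intro h <;> linarith
    simp only [hFdef]
    rw [← q3, ← g3, if_congr hc rfl rfl]
    ring
  set T : ℝ := ∑ j, ∑ l, ∑ m, ∑ n, β j * F j l m n with hT
  have h1 : (∑ j, ∑ l, ∑ m, ∑ n, β l * F j l m n) = -T := by
    calc (∑ j, ∑ l, ∑ m, ∑ n, β l * F j l m n)
        = ∑ j, ∑ l, ∑ m, ∑ n, β j * F l j n m :=
          hswap1 (fun j l m n => β l * F j l m n)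
      _ = ∑ j, ∑ l, ∑ m, ∑ n, -(β j * F j l m n) := by
          refine Finset.sum_congr rfl fun j _ => Finset.sum_congr rfl fun l _ =>
            Finset.sum_congr rfl fun m _ => Finset.sum_congr rfl fun n _ => ?_
          rw [hF1 j l m n]; ring
      _ = -T := by rw [hT]; simp [Finset.sum_neg_distrib]
  have h2 : (∑ j, ∑ l, ∑ m, ∑ n, β m * F j l m n) = -T := by
    calc (∑ j, ∑ l, ∑ m, ∑ n, β m * F j l m n)
        = ∑ j, ∑ l, ∑ m, ∑ n, β j * F m n j l :=
          hswap2 (fun j l m n => β m * F j l m n)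
      _ = ∑ j, ∑ l, ∑ m, ∑ n, -(β j * F j l m n) := by
          refine Finset.sum_congr rfl fun j _ => Finset.sum_congr rfl fun l _ =>
            Finset.sum_congr rfl fun m _ => Finset.sum_congr rfl fun n _ => ?_
          rw [hF2 j l m n]; ring
      _ = -T := by rw [hT]; simp [Finset.sum_neg_distrib]
  have h3 : (∑ j, ∑ l, ∑ m, ∑ n, β n * F j l m n) = T := by
    calc (∑ j, ∑ l, ∑ m, ∑ n, β n * F j l m n)
        = ∑ j, ∑ l, ∑ m, ∑ n, β j * F n m l j :=
          hswap3 (fun j l m n => β n * F j l m n)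
      _ = T := by
          rw [hT]
          refine Finset.sum_congr rfl fun j _ => Finset.sum_congr rfl fun l _ =>
            Finset.sum_congr rfl fun m _ => Finset.sum_congr rfl fun n _ => ?_
          rw [hF3 j l m n]
  have key : (∑ j, ∑ l, ∑ m, ∑ n, (β j - β l - β m + β n) * F j l m n) = 0 := by
    refine Finset.sum_eq_zero fun j _ => Finset.sum_eq_zero fun l _ =>
      Finset.sum_eq_zero fun m _ => Finset.sum_eq_zero fun n _ => ?_
    by_cases h : β j - β l - β m + β n = 0
    · rw [h, zero_mul]
    · simp only [hFdef, if_neg h, zero_mul, zero_div, mul_zero]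
  have hsplit : (∑ j, ∑ l, ∑ m, ∑ n, (β j - β l - β m + β n) * F j l m n)
      = (∑ j, ∑ l, ∑ m, ∑ n, β j * F j l m n)
        - (∑ j, ∑ l, ∑ m, ∑ n, β l * F j l m n)
        - (∑ j, ∑ l, ∑ m, ∑ n, β m * F j l m n)
        + (∑ j, ∑ l, ∑ m, ∑ n, β n * F j l m n) := by
    simp only [← Finset.sum_add_distrib, ← Finset.sum_sub_distrib]
    refine Finset.sum_congr rfl fun j _ => Finset.sum_congr rfl fun l _ =>
      Finset.sum_congr rfl fun m _ => Finset.sum_congr rfl fun n _ => ?_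
    ring
  have hT0 : T = 0 := by
    rw [hsplit, h1, h2, h3, ← hT] at key
    linarith
  calc ∑ j, β j * (8 * γ ^ 2 * ∑ l, ∑ m, ∑ n, F j l m n)
      = 8 * γ ^ 2 * T := by
        rw [hT, Finset.mul_sum]
        refine Finset.sum_congr rfl fun j _ => ?_
        simp only [Finset.mul_sum]
        refine Finset.sum_congr rfl fun l _ => Finset.sum_congr rfl fun m _ =>
          Finset.sum_congr rfl fun n _ => ?_
        ring
    _ = 0 := by rw [hT0, mul_zero]
end

section
/- (H-theorem) For positive w : Fin M → ℝ, the entropy production of the collision operator is nonnegative: Σ_j Coll_j[w]/w_j ≥ 0, where Coll_j[w] = 8γ² Σ_{l,m,n} δ_{jlmn} (Q_{jlmn}²/G_{jlmn}) (w_l w_m w_j + w_l w_m w_n − w_j w_n w_m − w_j w_n w_l). Equivalently, if w(z) solves ∂_z w_j = Coll_j[w] then the entropy S(z) = Σ_j log w_j(z) is nondecreasing. -/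
open Finset

set_option maxHeartbeats 4000000 in
/-- H-theorem: the entropy production of the collision operator is
nonnegative for positive `w`. -/
theorem collision_entropy_production_nonneg
    (M : ℕ) (hM : 1 ≤ M) (β : Fin M → ℝ) (γ : ℝ)
    (Q G : Fin M → Fin M → Fin M → Fin M → ℝ)
    (hQ : ∀ j l m n, Q j l m n = Q l j n m ∧ Q j l m n = Q m n j l ∧
      Q j l m n = Q n m l j)
    (hG : ∀ j l m n, G j l m n = G l j n m ∧ G j l m n = G m n j l ∧
      G j l m n = G n m l j)
    (hGpos : ∀ j l m n, β j - β l - β m + β n = 0 → 0 < G j l m n)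
    (w : Fin M → ℝ) (hw : ∀ j, 0 < w j) :
    0 ≤ ∑ j, (8 * γ ^ 2 * ∑ l, ∑ m, ∑ n,
      (if β j - β l - β m + β n = 0 then (1 : ℝ) else 0) *
        (Q j l m n) ^ 2 / G j l m n *
        (w l * w m * w j + w l * w m * w n - w j * w n * w m - w j * w n * w l))
      / w j := by
  set g : Fin M → Fin M → Fin M → Fin M → ℝ := fun j l m n =>
    (if β j - β l - β m + β n = 0 then (1 : ℝ) else 0) *
        (Q j l m n) ^ 2 / G j l m n *
        (w l * w m * w j + w l * w m * w n - w j * w n * w m - w j * w n * w l)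
      / w j with hg
  have key : ∀ j l m n, 0 ≤ g j l m n + g l j n m + g m n j l + g n m l j := by
    intro j l m n
    by_cases h : β j - β l - β m + β n = 0
    · have h2 : β l - β j - β n + β m = 0 := by linarith
      have h3 : β m - β n - β j + β l = 0 := by linarith
      have h4 : β n - β m - β l + β j = 0 := by linarith
      have q1 := (hQ j l m n).1
      have q2 := (hQ j l m n).2.1
      have q3 := (hQ j l m n).2.2
      have g1 := (hG j l m n).1
      have g2 := (hG j l m n).2.1
      have g3 := (hG j l m n).2.2
      have hGp : 0 < G j l m n := hGpos j l m n h
      have ha := hw j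
      have hb := hw l
      have hc := hw m
      have hd := hw n
      simp only [hg, if_pos h, if_pos h2, if_pos h3, if_pos h4, ← q1, ← q2, ← q3,
        ← g1, ← g2, ← g3, one_mul]
      have hsum : Q j l m n ^ 2 / G j l m n *
            (w l * w m * w j + w l * w m * w n - w j * w n * w m - w j * w n * w l) / w j +
          Q j l m n ^ 2 / G j l m n *
            (w j * w n * w l + w j * w n * w m - w l * w m * w n - w l * w m * w j) / w l +
          Q j l m n ^ 2 / G j l m n *
            (w n * w j * w m + w n * w j * w l - w m * w l * w j - w m * w l * w n) / w m +
          Q j l m n ^ 2 / G j l m n *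
            (w m * w l * w n + w m * w l * w j - w n * w j * w l - w n * w j * w m) / w n
          = Q j l m n ^ 2 *
              (w l * w m * (w j + w n) - w j * w n * (w l + w m)) ^ 2 /
            (G j l m n * (w j * w l * w m * w n)) := by
        field_simp
        ring
      rw [hsum]
      positivity
    · have h2 : ¬ (β l - β j - β n + β m = 0) := fun hh => h (by linarith)
      have h3 : ¬ (β m - β n - β j + β l = 0) := fun hh => h (by linarith)
      have h4 : ¬ (β n - β m - β l + β j = 0) := fun hh => h (by linarith)
      simp [hg, if_neg h, if_neg h2, if_neg h3, if_neg h4]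
  set T : ℝ := ∑ p : Fin M × Fin M × Fin M × Fin M, g p.1 p.2.1 p.2.2.1 p.2.2.2 with hT
  have hgoal : ∑ j, (8 * γ ^ 2 * ∑ l, ∑ m, ∑ n,
      (if β j - β l - β m + β n = 0 then (1 : ℝ) else 0) *
        (Q j l m n) ^ 2 / G j l m n *
        (w l * w m * w j + w l * w m * w n - w j * w n * w m - w j * w n * w l))
      / w j = 8 * γ ^ 2 * T := by
    simp only [hT, hg, Fintype.sum_prod_type, Finset.mul_sum, Finset.sum_div,
      mul_div_assoc]
  clear_value g
  have hT2 : T = ∑ p : Fin M × Fin M × Fin M × Fin M, g p.2.1 p.1 p.2.2.2 p.2.2.1 :=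
    Fintype.sum_equiv
      ⟨fun p => (p.2.1, p.1, p.2.2.2, p.2.2.1), fun p => (p.2.1, p.1, p.2.2.2, p.2.2.1),
        fun ⟨_, _, _, _⟩ => rfl, fun ⟨_, _, _, _⟩ => rfl⟩ _ _ (fun ⟨_, _, _, _⟩ => rfl)
  have hT3 : T = ∑ p : Fin M × Fin M × Fin M × Fin M, g p.2.2.1 p.2.2.2 p.1 p.2.1 :=
    Fintype.sum_equiv
      ⟨fun p => (p.2.2.1, p.2.2.2, p.1, p.2.1), fun p => (p.2.2.1, p.2.2.2, p.1, p.2.1),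
        fun ⟨_, _, _, _⟩ => rfl, fun ⟨_, _, _, _⟩ => rfl⟩ _ _ (fun ⟨_, _, _, _⟩ => rfl)
  have hT4 : T = ∑ p : Fin M × Fin M × Fin M × Fin M, g p.2.2.2 p.2.2.1 p.2.1 p.1 :=
    Fintype.sum_equiv
      ⟨fun p => (p.2.2.2, p.2.2.1, p.2.1, p.1), fun p => (p.2.2.2, p.2.2.1, p.2.1, p.1),
        fun ⟨_, _, _, _⟩ => rfl, fun ⟨_, _, _, _⟩ => rfl⟩ _ _ (fun ⟨_, _, _, _⟩ => rfl)
  have hTnn : 0 ≤ T := by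
    have h0 : (0 : ℝ) ≤ ∑ p : Fin M × Fin M × Fin M × Fin M,
        (g p.1 p.2.1 p.2.2.1 p.2.2.2 + g p.2.1 p.1 p.2.2.2 p.2.2.1 +
          g p.2.2.1 p.2.2.2 p.1 p.2.1 + g p.2.2.2 p.2.2.1 p.2.1 p.1) :=
      Finset.sum_nonneg fun p _ => key _ _ _ _
    rw [Finset.sum_add_distrib, Finset.sum_add_distrib, Finset.sum_add_distrib,
      ← hT, ← hT2, ← hT3, ← hT4] at h0
    linarith
  rw [hgoal]
  exact mul_nonneg (by positivity) hTnn
end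

section
/- The Rayleigh-Jeans distribution maximizes entropy under constraints: among all positive w : Fin M → ℝ with Σ_j w_j = N and Σ_j β_j w_j = E, the entropy S[w] = Σ_j log w_j attains its maximum at w_j = T/(β_j − μ) provided T > 0, μ < min_j β_j, Σ_j T/(β_j − μ) = N and Σ_j β_j T/(β_j − μ) = E. More precisely, for any admissible w, S[w] ≤ S[w^RJ]. -/
/-!
Concavity of `log` gives `log wⱼ - log vⱼ ≤ (wⱼ - vⱼ) / vⱼ` for the Rayleigh–Jeans weights
`vⱼ = T / (βⱼ - μ)`. Since `1 / vⱼ = (βⱼ - μ) / T` is affine in `βⱼ`, the summed right-hand side is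
`((E - μ N) - (E - μ N)) / T = 0`: `w` and `v` have the same particle number and energy.
-/

open Finset Real

lemma Real.log_sub_log_le_sub_div {x y : ℝ} (hx : 0 < x) (hy : 0 < y) :
    log x - log y ≤ (x - y) / y :=
  calc log x - log y = log (x / y) := (log_div hx.ne' hy.ne').symm
    _ ≤ x / y - 1 := log_le_sub_one_of_pos (div_pos hx hy)
    _ = (x - y) / y := by rw [sub_div, div_self hy.ne']

lemma Finset.sum_log_sub_sum_log_le {ι : Type*} (s : Finset ι) {x y : ι → ℝ}
    (hx : ∀ i ∈ s, 0 < x i) (hy : ∀ i ∈ s, 0 < y i) :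
    ∑ i ∈ s, log (x i) - ∑ i ∈ s, log (y i) ≤ ∑ i ∈ s, (x i - y i) / y i := by
  rw [← sum_sub_distrib]
  exact sum_le_sum fun i hi => log_sub_log_le_sub_div (hx i hi) (hy i hi)

lemma Finset.sum_sub_mul_eq {ι : Type*} (s : Finset ι) (β f : ι → ℝ) (μ : ℝ) :
    ∑ i ∈ s, (β i - μ) * f i = ∑ i ∈ s, β i * f i - μ * ∑ i ∈ s, f i := by
  simp only [sub_mul, sum_sub_distrib, mul_sum]

theorem RJ_maximizes_entropy_general
    (M : ℕ) (β : Fin M → ℝ) (N E T μ : ℝ)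
    (hT : 0 < T) (hμ : ∀ j, μ < β j)
    (hNRJ : ∑ j, T / (β j - μ) = N)
    (hERJ : ∑ j, β j * (T / (β j - μ)) = E)
    (w : Fin M → ℝ) (hw : ∀ j, 0 < w j)
    (hNw : ∑ j, w j = N) (hEw : ∑ j, β j * w j = E) :
    ∑ j, Real.log (w j) ≤ ∑ j, Real.log (T / (β j - μ)) := by
  set v : Fin M → ℝ := fun j => T / (β j - μ) with hv_def
  have hv : ∀ j, 0 < v j := fun j => div_pos hT (sub_pos.2 (hμ j))
  have hdev : ∑ j, (w j - v j) / v j = 0 :=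
    calc ∑ j, (w j - v j) / v j
        = (∑ j, (β j - μ) * w j - ∑ j, (β j - μ) * v j) / T := by
          simp only [hv_def, div_div_eq_mul_div, ← sum_div, ← sum_sub_distrib, mul_comm, mul_sub]
      _ = 0 := by rw [sum_sub_mul_eq, sum_sub_mul_eq, hNw, hEw, hNRJ, hERJ, sub_self, zero_div]
  have hgibbs := sum_log_sub_sum_log_le univ (fun j _ => hw j) (fun j _ => hv j)
  linarith

/-- The Rayleigh-Jeans distribution maximizes the entropy `S[w] = ∑ j, log (w j)`
among positive distributions with prescribed particle number `N` and energy `E`. -/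
theorem RJ_maximizes_entropy
    (M : ℕ) (hM : 1 ≤ M) (β : Fin M → ℝ) (N E T μ : ℝ)
    (hT : 0 < T) (hμ : ∀ j, μ < β j)
    (hNRJ : ∑ j, T / (β j - μ) = N)
    (hERJ : ∑ j, β j * (T / (β j - μ)) = E)
    (w : Fin M → ℝ) (hw : ∀ j, 0 < w j)
    (hNw : ∑ j, w j = N) (hEw : ∑ j, β j * w j = E) :
    ∑ j, Real.log (w j) ≤ ∑ j, Real.log (T / (β j - μ)) :=
  RJ_maximizes_entropy_general M β N E T μ hT hμ hNRJ hERJ w hw hNw hEw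
end
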